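/- For every p ≥ 1 and all i, j with 2 < i, j ≤ 2n: (1) (R^{2p}·ω)(e_1, e_2, …, e_1, e_2, e_1, e_i, e_2, e_j), with 2p−1 leading pairs (e_1, e_2), equals 2^{2p−1} β² (α² + β²)^{p−1} h(e_i, e_j) ω(e_1, e_2); (2) (R^{2p}·ω)(e_1, e_2, …, e_1, e_2, e_2, e_i, e_1, e_j), with 2p−1 leading pairs (e_1, e_2), equals 2^{2p−1} β² (α² + β²)^{p−1} h(e_i, e_j) ω(e_1, e_2); (3) (R^{2p}·ω)(e_1, e_2, …, e_1, e_2, e_1, e_i, e_1, e_j) − (R^{2p}·ω)(e_1, e_2, …, e_1, e_2, e_2, e_i, e_2, e_j), each with 2p−1 leading pairs (e_1, e_2), equals −2^{2p} α β (α² + β²)^{p−1} h(e_i, e_j) ω(e_1, e_2). -/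

import Mathlib

/-
Put `A = R(e₁, e₂)`. Consuming a pair `(u, v)` of the plane `P = span(e₁, e₂)` turns `R`
into `-det(u, v) · A` acting as a derivation on the remaining arguments. Since `A` preserves
`P` and is traceless there, this commutes with the later pairs, so that
`R^{2p}·ω (pairs, x, eᵢ, y, eⱼ) = -(A^{2p-1} · (R·ω))(x, eᵢ, y, eⱼ)`.
As `A` kills `eᵢ, eⱼ` and `A² = α² + β²` on `P`, applying the derivation `A` twice more
multiplies `A · (R·ω)` by `4(α² + β²)` on `P × P`, and what is left is a direct computation
of `A · (R·ω)` on `e₁, e₂`.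
-/

noncomputable section

/-- Gauss-equation curvature `R(X,Y)Z = h(Y,Z)·S(X) − h(X,Z)·S(Y)`. -/
def RR {V : Type*} [AddCommGroup V] [Module ℝ V]
    (h : V →ₗ[ℝ] V →ₗ[ℝ] ℝ) (S : V →ₗ[ℝ] V) (X Y Z : V) : V :=
  h Y Z • S X - h X Z • S Y

/-- One application of the curvature action on an `m`-linear form (encoded as a
function on lists of vectors): `(R·T)(X,Y,Z₁,…,Zₘ) = −∑ᵢ T(Z₁,…,R(X,Y)Zᵢ,…,Zₘ)`;
the two newest (leftmost) arguments are consumed. -/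
def RAct {V : Type*} [AddCommGroup V] [Module ℝ V]
    (h : V →ₗ[ℝ] V →ₗ[ℝ] ℝ) (S : V →ₗ[ℝ] V) (T : List V → ℝ) : List V → ℝ
  | X :: Y :: Zs =>
      -∑ i ∈ Finset.range Zs.length, T (Zs.set i (RR h S X Y (Zs.getD i 0)))
  | _ => 0

/-- `R^p · ω`, as a function on lists of vectors (of length `2p+2`):
`R⁰·ω = ω` and `R^p·ω = R·(R^{p−1}·ω)`. -/
def Rpow {V : Type*} [AddCommGroup V] [Module ℝ V]
    (h : V →ₗ[ℝ] V →ₗ[ℝ] ℝ) (S : V →ₗ[ℝ] V) (ω : V →ₗ[ℝ] V →ₗ[ℝ] ℝ) (p : ℕ) :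
    List V → ℝ :=
  (RAct h S)^[p] (fun l => ω (l.getD 0 0) (l.getD 1 0))

/-- The list `X, Y, X, Y, …` with `p` pairs `(X, Y)`. -/
def pairList {V : Type*} (X Y : V) : ℕ → List V
  | 0 => []
  | p + 1 => X :: Y :: pairList X Y p

/-- The list `f 1, y, f 2, y, …, f p, y`. -/
def interleave {V : Type*} (f : ℕ → V) (y : V) : ℕ → List V
  | 0 => []
  | p + 1 => interleave f y p ++ [f (p + 1), y]

theorem length_pairList {α : Type*} (x y : α) (q : ℕ) : (pairList x y q).length = 2 * q := by
  induction q with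
  | zero => rfl
  | succ q ih => simp only [pairList, List.length_cons, ih]; omega

section ListForms

variable {V : Type*} [AddCommGroup V] [Module ℝ V]

def IsListMultilinear (T : List V → ℝ) (N : ℕ) : Prop :=
  ∀ L : List V, L.length = N → ∀ i < N, ∀ (c : ℝ) (x y : V),
    T (L.set i (c • x + y)) = c * T (L.set i x) + T (L.set i y)

namespace IsListMultilinear

variable {T : List V → ℝ} {N : ℕ} {L : List V}

theorem map_zero (hT : IsListMultilinear T N) (hL : L.length = N) {i : ℕ} (hi : i < N) :
    T (L.set i 0) = 0 := by
  have := hT L hL i hi 1 0 0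
  simp only [one_smul, add_zero, one_mul] at this
  linarith

theorem map_smul (hT : IsListMultilinear T N) (hL : L.length = N) {i : ℕ} (hi : i < N)
    (c : ℝ) (x : V) : T (L.set i (c • x)) = c * T (L.set i x) := by
  simpa only [add_zero, hT.map_zero hL hi] using hT L hL i hi c x 0

end IsListMultilinear

def derivAct (A : V →ₗ[ℝ] V) (T : List V → ℝ) (L : List V) : ℝ :=
  ∑ i ∈ Finset.range L.length, T (L.set i (A (L.getD i 0)))

variable {A B : V →ₗ[ℝ] V} {T T' : List V → ℝ} {N : ℕ} {L : List V}

theorem derivAct_nil : derivAct A T [] = 0 := rfl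

theorem derivAct_cons (u : V) (L : List V) :
    derivAct A T (u :: L) = T (A u :: L) + derivAct A (fun L' => T (u :: L')) L := by
  simp only [derivAct, List.length_cons, Finset.sum_range_succ', List.set_cons_succ,
    List.getD_cons_succ, List.set_cons_zero, List.getD_cons_zero]
  ring

theorem derivAct_congr (hTT' : ∀ L', L'.length = L.length → T L' = T' L') :
    derivAct A T L = derivAct A T' L :=
  Finset.sum_congr rfl fun _ _ => hTT' _ (List.length_set ..)

theorem derivAct_const_mul (r : ℝ) :
    derivAct A (fun L' => r * T L') L = r * derivAct A T L :=
  (Finset.mul_sum ..).symm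

theorem derivAct_add_op (hT : IsListMultilinear T N) (hL : L.length = N) :
    derivAct (A + B) T L = derivAct A T L + derivAct B T L := by
  rw [derivAct, derivAct, derivAct, ← Finset.sum_add_distrib]
  refine Finset.sum_congr rfl fun i hi => ?_
  simpa using hT L hL i (hL ▸ Finset.mem_range.1 hi) 1 (A (L.getD i 0)) (B (L.getD i 0))

theorem derivAct_smul_op (hT : IsListMultilinear T N) (hL : L.length = N) (c : ℝ) :
    derivAct (c • A) T L = c * derivAct A T L := by
  rw [derivAct, derivAct, Finset.mul_sum]
  exact Finset.sum_congr rfl fun i hi => hT.map_smul hL (hL ▸ Finset.mem_range.1 hi) _ _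

theorem isListMultilinear_derivAct (hT : IsListMultilinear T N) (A : V →ₗ[ℝ] V) :
    IsListMultilinear (derivAct A T) N := by
  intro L hL i hi c x y
  simp only [derivAct, List.length_set, Finset.mul_sum, ← Finset.sum_add_distrib]
  refine Finset.sum_congr rfl fun j hj => ?_
  have hj : j < N := hL ▸ Finset.mem_range.1 hj
  by_cases hji : j = i
  · subst hji
    simp only [List.set_set, List.getD_eq_getElem?_getD, List.getElem?_set_self (hL ▸ hi),
      Option.getD_some, _root_.map_add, _root_.map_smul]
    exact hT L hL j hj c _ _
  · simp only [List.getD_eq_getElem?_getD, List.getElem?_set_ne (Ne.symm hji),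
      List.set_comm _ _ (Ne.symm hji)]
    exact hT _ (by simp [hL]) i hi c x y

theorem isListMultilinear_iterate_derivAct (hT : IsListMultilinear T N) (A : V →ₗ[ℝ] V)
    (k : ℕ) : IsListMultilinear ((derivAct A)^[k] T) N := by
  induction k with
  | zero => exact hT
  | succ k ih => rw [Function.iterate_succ_apply']; exact isListMultilinear_derivAct ih A

end ListForms

section Curvature

variable {V : Type*} [AddCommGroup V] [Module ℝ V]
  {h ω : V →ₗ[ℝ] V →ₗ[ℝ] ℝ} {S : V →ₗ[ℝ] V}

def curvatureOp (h : V →ₗ[ℝ] V →ₗ[ℝ] ℝ) (S : V →ₗ[ℝ] V) (X Y : V) : V →ₗ[ℝ] V :=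
  (h Y).smulRight (S X) - (h X).smulRight (S Y)

theorem curvatureOp_apply (X Y Z : V) : curvatureOp h S X Y Z = RR h S X Y Z := rfl

theorem curvatureOp_smul_add_left (c : ℝ) (x y Y : V) :
    curvatureOp h S (c • x + y) Y = c • curvatureOp h S x Y + curvatureOp h S y Y := by
  ext Z
  simp only [curvatureOp_apply, RR, LinearMap.add_apply, LinearMap.smul_apply, map_add, map_smul,
    smul_eq_mul]
  module

theorem curvatureOp_smul_add_right (c : ℝ) (X x y : V) :
    curvatureOp h S X (c • x + y) = c • curvatureOp h S X x + curvatureOp h S X y := by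
  ext Z
  simp only [curvatureOp_apply, RR, LinearMap.add_apply, LinearMap.smul_apply, map_add, map_smul,
    smul_eq_mul]
  module

theorem curvatureOp_plane (x₁ x₂ : V) (u₁ u₂ v₁ v₂ : ℝ) :
    curvatureOp h S (u₁ • x₁ + u₂ • x₂) (v₁ • x₁ + v₂ • x₂)
      = (u₁ * v₂ - u₂ * v₁) • curvatureOp h S x₁ x₂ := by
  ext Z
  simp only [curvatureOp_apply, RR, LinearMap.smul_apply, map_add, map_smul, LinearMap.add_apply,
    smul_eq_mul]
  module

theorem curvatureOp_apply_eq_zero {X Y w : V} (hX : h X w = 0) (hY : h Y w = 0) :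
    curvatureOp h S X Y w = 0 := by
  simp [curvatureOp_apply, RR, hX, hY]

theorem curvatureOp_apply_apply_of_traceless {x₁ x₂ : V} {a b c : ℝ}
    (hA₁ : curvatureOp h S x₁ x₂ x₁ = a • x₁ + b • x₂)
    (hA₂ : curvatureOp h S x₁ x₂ x₂ = c • x₁ - a • x₂) :
    curvatureOp h S x₁ x₂ (curvatureOp h S x₁ x₂ x₁) = (a ^ 2 + b * c) • x₁ ∧
      curvatureOp h S x₁ x₂ (curvatureOp h S x₁ x₂ x₂) = (a ^ 2 + b * c) • x₂ := by
  constructor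
  · rw [hA₁, map_add, map_smul, map_smul, hA₁, hA₂]; module
  · rw [hA₂, map_sub, map_smul, map_smul, hA₁, hA₂]; module

theorem RAct_cons (T : List V → ℝ) (X Y : V) (Zs : List V) :
    RAct h S T (X :: Y :: Zs) = -derivAct (curvatureOp h S X Y) T Zs := rfl

theorem Rpow_succ (m : ℕ) : Rpow h S ω (m + 1) = RAct h S (Rpow h S ω m) :=
  Function.iterate_succ_apply' ..

theorem isListMultilinear_RAct {T : List V → ℝ} {N : ℕ} (hT : IsListMultilinear T N) :
    IsListMultilinear (RAct h S T) (N + 2) := by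
  rintro (_ | ⟨X, _ | ⟨Y, Zs⟩⟩) hL i hi c x y
  · simp at hL
  · simp at hL
  have hZs : Zs.length = N := by simpa using hL
  rcases i with _ | _ | k
  · simp only [List.set_cons_zero, RAct_cons, curvatureOp_smul_add_left,
      derivAct_add_op hT hZs, derivAct_smul_op hT hZs]
    ring
  · simp only [List.set_cons_succ, List.set_cons_zero, RAct_cons, curvatureOp_smul_add_right,
      derivAct_add_op hT hZs, derivAct_smul_op hT hZs]
    ring
  · simp only [List.set_cons_succ, RAct_cons,
      isListMultilinear_derivAct hT _ Zs hZs k (by omega) c x y]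
    ring

theorem isListMultilinear_Rpow (m : ℕ) : IsListMultilinear (Rpow h S ω m) (2 * m + 2) := by
  induction m with
  | zero =>
    rintro (_ | ⟨a, _ | ⟨b, _ | _⟩⟩) hL i hi c x y <;> simp at hL
    interval_cases i <;> simp [Rpow]
  | succ m ih => rw [Rpow_succ]; exact isListMultilinear_RAct ih

end Curvature

section PairConsumption

variable {V : Type*} [AddCommGroup V] [Module ℝ V]
  {h ω : V →ₗ[ℝ] V →ₗ[ℝ] ℝ} {S : V →ₗ[ℝ] V} {x₁ x₂ : V} {a b c : ℝ}

/-- Consuming a pair `(u, v)` of the plane of `x₁, x₂` produces `R(u, v) = det(u, v) • A`;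
since `A` is traceless on that plane, the derivation `A` commutes with this step. -/
theorem iterate_derivAct_Rpow_succ_cons_cons
    (hA₁ : curvatureOp h S x₁ x₂ x₁ = a • x₁ + b • x₂)
    (hA₂ : curvatureOp h S x₁ x₂ x₂ = c • x₁ - a • x₂) (k m : ℕ) (u₁ u₂ v₁ v₂ : ℝ)
    {L : List V} (hL : L.length = 2 * m + 2) :
    (derivAct (curvatureOp h S x₁ x₂))^[k] (Rpow h S ω (m + 1))
        ((u₁ • x₁ + u₂ • x₂) :: (v₁ • x₁ + v₂ • x₂) :: L)
      = -(u₁ * v₂ - u₂ * v₁) * (derivAct (curvatureOp h S x₁ x₂))^[k + 1] (Rpow h S ω m) L := by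
  set A := curvatureOp h S x₁ x₂
  induction k generalizing u₁ u₂ v₁ v₂ L with
  | zero =>
    rw [Function.iterate_zero_apply, Rpow_succ, RAct_cons, curvatureOp_plane,
      derivAct_smul_op (isListMultilinear_Rpow m) hL, Function.iterate_one]
    ring
  | succ k ih =>
    have hA (t₁ t₂ : ℝ) :
        A (t₁ • x₁ + t₂ • x₂) = (t₁ * a + t₂ * c) • x₁ + (t₁ * b - t₂ * a) • x₂ := by
      rw [map_add, map_smul, map_smul, hA₁, hA₂]; module
    rw [Function.iterate_succ_apply', derivAct_cons, derivAct_cons, hA, hA, ih _ _ _ _ hL,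
      ih _ _ _ _ hL, derivAct_congr (fun L' hL' => ih u₁ u₂ v₁ v₂ (hL'.trans hL)),
      derivAct_const_mul, ← Function.iterate_succ_apply' (derivAct A)]
    ring

theorem iterate_derivAct_Rpow_add_pairList
    (hA₁ : curvatureOp h S x₁ x₂ x₁ = a • x₁ + b • x₂)
    (hA₂ : curvatureOp h S x₁ x₂ x₂ = c • x₁ - a • x₂) (q k m : ℕ)
    {L : List V} (hL : L.length = 2 * m + 2) :
    (derivAct (curvatureOp h S x₁ x₂))^[k] (Rpow h S ω (m + q)) (pairList x₁ x₂ q ++ L)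
      = (-1) ^ q * (derivAct (curvatureOp h S x₁ x₂))^[k + q] (Rpow h S ω m) L := by
  induction q generalizing k with
  | zero => simp [pairList]
  | succ q ih =>
    have hpair : pairList x₁ x₂ (q + 1) ++ L
        = ((1 : ℝ) • x₁ + (0 : ℝ) • x₂) :: ((0 : ℝ) • x₁ + (1 : ℝ) • x₂)
            :: (pairList x₁ x₂ q ++ L) := by
      simp [pairList]
    have hlen : (pairList x₁ x₂ q ++ L).length = 2 * (m + q) + 2 := by
      simp only [List.length_append, length_pairList, hL]; ring
    rw [hpair, ← add_assoc, iterate_derivAct_Rpow_succ_cons_cons hA₁ hA₂ _ _ _ _ _ _ hlen, ih,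
      add_right_comm k 1 q, ← add_assoc k q 1, pow_succ]
    ring

end PairConsumption

section TailForm

variable {V : Type*} [AddCommGroup V] [Module ℝ V]
  {h ω : V →ₗ[ℝ] V →ₗ[ℝ] ℝ} {S : V →ₗ[ℝ] V} {A : V →ₗ[ℝ] V} {w z : V}

def tailForm (h ω : V →ₗ[ℝ] V →ₗ[ℝ] ℝ) (S A : V →ₗ[ℝ] V) (w z : V) (k : ℕ) (x y : V) : ℝ :=
  (derivAct A)^[k] (Rpow h S ω 1) [x, w, y, z]

theorem tailForm_zero (x y : V) :
    tailForm h ω S A w z 0 x y = -ω (RR h S x w y) z - ω y (RR h S x w z) := by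
  simp only [tailForm, Rpow, Function.iterate_one, Function.iterate_zero_apply, RAct_cons,
    derivAct_cons, derivAct_nil, List.getD_cons_zero, List.getD_cons_succ, curvatureOp_apply]
  ring

theorem tailForm_smul_left (k : ℕ) (c : ℝ) (x y : V) :
    tailForm h ω S A w z k (c • x) y = c * tailForm h ω S A w z k x y :=
  (isListMultilinear_iterate_derivAct (isListMultilinear_Rpow 1) A k).map_smul
    (L := [x, w, y, z]) rfl (i := 0) (by norm_num) c x

theorem tailForm_smul_right (k : ℕ) (c : ℝ) (x y : V) :
    tailForm h ω S A w z k x (c • y) = c * tailForm h ω S A w z k x y :=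
  (isListMultilinear_iterate_derivAct (isListMultilinear_Rpow 1) A k).map_smul
    (L := [x, w, y, z]) rfl (i := 2) (by norm_num) c y

theorem tailForm_succ (hw : A w = 0) (hz : A z = 0) (k : ℕ) (x y : V) :
    tailForm h ω S A w z (k + 1) x y
      = tailForm h ω S A w z k (A x) y + tailForm h ω S A w z k x (A y) := by
  have hT := isListMultilinear_iterate_derivAct
    (isListMultilinear_Rpow (h := h) (S := S) (ω := ω) 1) A k
  have hw0 := hT.map_zero (L := [x, w, y, z]) rfl (i := 1) (by norm_num)
  have hz0 := hT.map_zero (L := [x, w, y, z]) rfl (i := 3) (by norm_num)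
  simp only [List.set_cons_succ, List.set_cons_zero] at hw0 hz0
  simp only [tailForm, Function.iterate_succ_apply', derivAct_cons, derivAct_nil, hw, hz, hw0, hz0]
  ring

variable {s : ℝ} {x y : V}

theorem tailForm_succ_apply_apply (hw : A w = 0) (hz : A z = 0) (hx : A (A x) = s • x)
    (hy : A (A y) = s • y) (k : ℕ) :
    tailForm h ω S A w z (k + 1) (A x) (A y) = s * tailForm h ω S A w z (k + 1) x y := by
  rw [tailForm_succ hw hz, tailForm_succ hw hz, hx, hy, tailForm_smul_left, tailForm_smul_right]
  ring

theorem tailForm_add_two (hw : A w = 0) (hz : A z = 0) (hx : A (A x) = s • x)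
    (hy : A (A y) = s • y) (k : ℕ) :
    tailForm h ω S A w z (k + 3) x y = 4 * s * tailForm h ω S A w z (k + 1) x y := by
  rw [tailForm_succ hw hz, tailForm_succ hw hz, tailForm_succ hw hz (k + 1) x, hx, hy,
    tailForm_smul_left, tailForm_smul_right, tailForm_succ_apply_apply hw hz hx hy]
  ring

theorem tailForm_two_mul_add_one (hw : A w = 0) (hz : A z = 0) (hx : A (A x) = s • x)
    (hy : A (A y) = s • y) (p : ℕ) :
    tailForm h ω S A w z (2 * p + 1) x y = (4 * s) ^ p * tailForm h ω S A w z 1 x y := by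
  induction p with
  | zero => simp
  | succ p ih =>
    rw [show 2 * (p + 1) + 1 = 2 * p + 3 by ring, tailForm_add_two hw hz hx hy, ih, pow_succ]
    ring

theorem Rpow_pairList_append {x₁ x₂ : V} {a b c : ℝ}
    (hA₁ : curvatureOp h S x₁ x₂ x₁ = a • x₁ + b • x₂)
    (hA₂ : curvatureOp h S x₁ x₂ x₂ = c • x₁ - a • x₂)
    (hw : curvatureOp h S x₁ x₂ w = 0) (hz : curvatureOp h S x₁ x₂ z = 0)
    (hx : curvatureOp h S x₁ x₂ (curvatureOp h S x₁ x₂ x) = s • x)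
    (hy : curvatureOp h S x₁ x₂ (curvatureOp h S x₁ x₂ y) = s • y) (p : ℕ) :
    Rpow h S ω (2 * p + 2) (pairList x₁ x₂ (2 * p + 1) ++ [x, w, y, z])
      = -((4 * s) ^ p * tailForm h ω S (curvatureOp h S x₁ x₂) w z 1 x y) := by
  have hpairs := iterate_derivAct_Rpow_add_pairList (ω := ω) hA₁ hA₂ (2 * p + 1) 0 1
    (L := [x, w, y, z]) rfl
  rw [Function.iterate_zero_apply, zero_add] at hpairs
  rw [show 2 * p + 2 = 1 + (2 * p + 1) by ring, hpairs, (Odd.neg_one_pow ⟨p, rfl⟩ : _ = (-1 : ℝ)),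
    ← tailForm_two_mul_add_one hw hz hx hy, neg_one_mul]
  rfl

end TailForm

section JordanBlock

variable {V : Type*} [AddCommGroup V] [Module ℝ V]
  {h ω : V →ₗ[ℝ] V →ₗ[ℝ] ℝ} {S : V →ₗ[ℝ] V}

theorem curvatureOp_jordan {e₁ e₂ : V} {α β : ℝ}
    (hS₁ : S e₁ = α • e₁ - β • e₂) (hS₂ : S e₂ = β • e₁ + α • e₂)
    (h₁₁ : h e₁ e₁ = 0) (h₁₂ : h e₁ e₂ = 1) (h₂₁ : h e₂ e₁ = 1) (h₂₂ : h e₂ e₂ = 0) :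
    curvatureOp h S e₁ e₂ e₁ = α • e₁ + (-β) • e₂ ∧
      curvatureOp h S e₁ e₂ e₂ = (-β) • e₁ - α • e₂ := by
  constructor
  · rw [curvatureOp_apply, RR, h₂₁, h₁₁, hS₁]; module
  · rw [curvatureOp_apply, RR, h₂₂, h₁₂, hS₂]; module

theorem tailForm_one_jordan {e₁ e₂ w z : V} {α β : ℝ} (halt : ω.IsAlt)
    (hS₁ : S e₁ = α • e₁ - β • e₂) (hS₂ : S e₂ = β • e₁ + α • e₂)
    (h₁₁ : h e₁ e₁ = 0) (h₁₂ : h e₁ e₂ = 1) (h₂₁ : h e₂ e₁ = 1) (h₂₂ : h e₂ e₂ = 0)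
    (h₁w : h e₁ w = 0) (h₂w : h e₂ w = 0) (hw₁ : h w e₁ = 0) (hw₂ : h w e₂ = 0)
    (h₁z : h e₁ z = 0) (h₂z : h e₂ z = 0) :
    tailForm h ω S (curvatureOp h S e₁ e₂) w z 1 e₁ e₂ = -(2 * β ^ 2 * h w z * ω e₁ e₂) ∧
    tailForm h ω S (curvatureOp h S e₁ e₂) w z 1 e₂ e₁ = -(2 * β ^ 2 * h w z * ω e₁ e₂) ∧
    tailForm h ω S (curvatureOp h S e₁ e₂) w z 1 e₁ e₁
        - tailForm h ω S (curvatureOp h S e₁ e₂) w z 1 e₂ e₂ = 4 * α * β * h w z * ω e₁ e₂ := by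
  obtain ⟨hA₁, hA₂⟩ := curvatureOp_jordan hS₁ hS₂ h₁₁ h₁₂ h₂₁ h₂₂
  have hw := curvatureOp_apply_eq_zero (S := S) h₁w h₂w
  have hz := curvatureOp_apply_eq_zero (S := S) h₁z h₂z
  have hω₂₁ : ω e₂ e₁ = -ω e₁ e₂ := (halt.neg e₁ e₂).symm
  simp only [tailForm_succ hw hz, tailForm_zero, hA₁, hA₂, RR, map_add, map_sub, map_smul,
    LinearMap.add_apply, LinearMap.sub_apply, LinearMap.smul_apply, smul_eq_mul, hS₁, hS₂,
    h₁₁, h₁₂, h₂₁, h₂₂, hw₁, hw₂, h₁z, h₂z, halt.self_eq_zero, hω₂₁]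
  refine ⟨?_, ?_, ?_⟩ <;> ring

end JordanBlock

theorem stmt18_general
    {V : Type*} [AddCommGroup V] [Module ℝ V]
    (n : ℕ) (e : ℕ → V)
    (h ω : V →ₗ[ℝ] V →ₗ[ℝ] ℝ)
    (halt : ∀ X, ω X X = 0)
    (S : V →ₗ[ℝ] V)
    (α β : ℝ)
    (hS1 : S (e 1) = α • e 1 - β • e 2)
    (hS2 : S (e 2) = β • e 1 + α • e 2)
    (hh12 : h (e 1) (e 2) = 1) (hh21 : h (e 2) (e 1) = 1)
    (hh0 : ∀ i j, 1 ≤ i → i ≤ 2 * n → 1 ≤ j → j ≤ 2 * n → min i j ≤ 2 →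
      ¬((i = 1 ∧ j = 2) ∨ (i = 2 ∧ j = 1)) → h (e i) (e j) = 0)
    (p : ℕ) (hp : 1 ≤ p)
    (i j : ℕ) (hi2 : 2 < i) (hi : i ≤ 2 * n) (hj2 : 2 < j) (hj : j ≤ 2 * n) :
    Rpow h S ω (2 * p) (pairList (e 1) (e 2) (2 * p - 1) ++ [e 1, e i, e 2, e j]) =
      2 ^ (2 * p - 1) * β ^ 2 * (α ^ 2 + β ^ 2) ^ (p - 1) * h (e i) (e j) * ω (e 1) (e 2) ∧
    Rpow h S ω (2 * p) (pairList (e 1) (e 2) (2 * p - 1) ++ [e 2, e i, e 1, e j]) =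
      2 ^ (2 * p - 1) * β ^ 2 * (α ^ 2 + β ^ 2) ^ (p - 1) * h (e i) (e j) * ω (e 1) (e 2) ∧
    Rpow h S ω (2 * p) (pairList (e 1) (e 2) (2 * p - 1) ++ [e 1, e i, e 1, e j]) -
        Rpow h S ω (2 * p) (pairList (e 1) (e 2) (2 * p - 1) ++ [e 2, e i, e 2, e j]) =
      -(2 ^ (2 * p)) * α * β * (α ^ 2 + β ^ 2) ^ (p - 1) * h (e i) (e j) * ω (e 1) (e 2) := by
  obtain ⟨p, rfl⟩ : ∃ q, p = q + 1 := ⟨p - 1, by omega⟩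
  have horth (k : ℕ) (hk : 2 < k) (hkn : k ≤ 2 * n) :
      h (e 1) (e k) = 0 ∧ h (e 2) (e k) = 0 ∧ h (e k) (e 1) = 0 ∧ h (e k) (e 2) = 0 :=
    ⟨hh0 _ _ (by omega) (by omega) (by omega) hkn (by omega) (by omega),
      hh0 _ _ (by omega) (by omega) (by omega) hkn (by omega) (by omega),
      hh0 _ _ (by omega) hkn (by omega) (by omega) (by omega) (by omega),
      hh0 _ _ (by omega) hkn (by omega) (by omega) (by omega) (by omega)⟩
  obtain ⟨h1i, h2i, hi1, hi2'⟩ := horth i hi2 hi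
  obtain ⟨h1j, h2j, -, -⟩ := horth j hj2 hj
  have hh11 := hh0 1 1 le_rfl (by omega) le_rfl (by omega) (by omega) (by omega)
  have hh22 := hh0 2 2 (by omega) (by omega) (by omega) (by omega) (by omega) (by omega)
  obtain ⟨hA1, hA2⟩ := curvatureOp_jordan hS1 hS2 hh11 hh12 hh21 hh22
  obtain ⟨hAA1, hAA2⟩ := curvatureOp_apply_apply_of_traceless hA1 hA2
  have hAi := curvatureOp_apply_eq_zero (S := S) h1i h2i
  have hAj := curvatureOp_apply_eq_zero (S := S) h1j h2j
  obtain ⟨h12, h21, hdiff⟩ := tailForm_one_jordan (ω := ω) halt hS1 hS2 hh11 hh12 hh21 hh22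
    h1i h2i hi1 hi2' h1j h2j
  have h2pow : (2 : ℝ) ^ (2 * p + 1) = 2 * 4 ^ p := by rw [pow_succ, pow_mul]; norm_num; ring
  have h4pow : (2 : ℝ) ^ (2 * p + 2) = 4 * 4 ^ p := by
    rw [pow_succ, pow_succ, pow_mul]; norm_num; ring
  rw [show 2 * (p + 1) - 1 = 2 * p + 1 by omega, show 2 * (p + 1) = 2 * p + 2 by ring,
    add_tsub_cancel_right, Rpow_pairList_append hA1 hA2 hAi hAj hAA1 hAA2,
    Rpow_pairList_append hA1 hA2 hAi hAj hAA2 hAA1, Rpow_pairList_append hA1 hA2 hAi hAj hAA1 hAA1,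
    Rpow_pairList_append hA1 hA2 hAi hAj hAA2 hAA2, h12, h21, h2pow, h4pow, mul_pow]
  refine ⟨by ring, by ring, ?_⟩
  linear_combination (-(4 : ℝ) ^ p * (α ^ 2 + β ^ 2) ^ p) * hdiff

theorem stmt18
    {V : Type*} [AddCommGroup V] [Module ℝ V]
    (n : ℕ) (hn : 2 ≤ n) (e : ℕ → V)
    (hbasis : ∃ b : Module.Basis (Fin (2 * n)) ℝ V, ∀ i : Fin (2 * n), b i = e (i.1 + 1))
    (h ω : V →ₗ[ℝ] V →ₗ[ℝ] ℝ)
    (hsymm : ∀ X Y, h X Y = h Y X)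
    (halt : ∀ X, ω X X = 0)
    (S : V →ₗ[ℝ] V)
    (α β : ℝ) (hβ : β ≠ 0)
    (hS1 : S (e 1) = α • e 1 - β • e 2)
    (hS2 : S (e 2) = β • e 1 + α • e 2)
    (hh12 : h (e 1) (e 2) = 1) (hh21 : h (e 2) (e 1) = 1)
    (hh0 : ∀ i j, 1 ≤ i → i ≤ 2 * n → 1 ≤ j → j ≤ 2 * n → min i j ≤ 2 →
      ¬((i = 1 ∧ j = 2) ∨ (i = 2 ∧ j = 1)) → h (e i) (e j) = 0)
    (p : ℕ) (hp : 1 ≤ p)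
    (i j : ℕ) (hi2 : 2 < i) (hi : i ≤ 2 * n) (hj2 : 2 < j) (hj : j ≤ 2 * n) :
    Rpow h S ω (2 * p) (pairList (e 1) (e 2) (2 * p - 1) ++ [e 1, e i, e 2, e j]) =
      2 ^ (2 * p - 1) * β ^ 2 * (α ^ 2 + β ^ 2) ^ (p - 1) * h (e i) (e j) * ω (e 1) (e 2) ∧
    Rpow h S ω (2 * p) (pairList (e 1) (e 2) (2 * p - 1) ++ [e 2, e i, e 1, e j]) =
      2 ^ (2 * p - 1) * β ^ 2 * (α ^ 2 + β ^ 2) ^ (p - 1) * h (e i) (e j) * ω (e 1) (e 2) ∧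
    Rpow h S ω (2 * p) (pairList (e 1) (e 2) (2 * p - 1) ++ [e 1, e i, e 1, e j]) -
        Rpow h S ω (2 * p) (pairList (e 1) (e 2) (2 * p - 1) ++ [e 2, e i, e 2, e j]) =
      -(2 ^ (2 * p)) * α * β * (α ^ 2 + β ^ 2) ^ (p - 1) * h (e i) (e j) * ω (e 1) (e 2) :=
  stmt18_general n e h ω halt S α β hS1 hS2 hh12 hh21 hh0 p hp i j hi2 hi hj2 hj
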